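/- arXiv:2401.02636 — 5 statements merged into one kernel-verified Lean document; each statement's English description precedes it below -/
import Mathlib

section
/- Let Q be a set of points and S a set of points in the Euclidean plane, let p ∈ Q and q' ∈ S, and assume that dist(p, q') ≤ dist(r, z) for every r ∈ Q and every z ∈ S (i.e., the pair (p, q') realizes the minimum distance between Q and S). Then for every point w in the segment [q', p] and every r ∈ Q one has dist(w, p) ≤ dist(w, r); that is, p is a nearest point of Q to every point of the segment joining q' to p. -/
theorem dist_le_dist_of_mem_segment_of_dist_le {E : Type*} [SeminormedAddCommGroup E]
    [NormedSpace ℝ E] {p q r w : E} (hw : w ∈ segment ℝ q p) (h : dist p q ≤ dist r q) :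
    dist w p ≤ dist w r :=
  calc dist w p = dist q p - dist q w := by linarith [dist_add_dist_of_mem_segment hw]
    _ ≤ dist r q - dist q w := by rw [dist_comm q p]; linarith
    _ ≤ dist w r := by linarith [dist_triangle r w q, dist_comm r w, dist_comm w q]

theorem closest_pair_segment_nearest_general
    (Q S : Set (EuclideanSpace ℝ (Fin 2)))
    (p q' : EuclideanSpace ℝ (Fin 2)) (hq' : q' ∈ S)
    (hmin : ∀ r ∈ Q, ∀ z ∈ S, dist p q' ≤ dist r z) :
    ∀ w ∈ segment ℝ q' p, ∀ r ∈ Q, dist w p ≤ dist w r :=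
  fun _ hw r hr => dist_le_dist_of_mem_segment_of_dist_le hw (hmin r hr q' hq')

/-- If the pair `(p, q')` realizes the minimum distance between the sets `Q` and `S`
in the Euclidean plane, then `p` is a nearest point of `Q` to every point of the
segment joining `q'` to `p`. -/
theorem closest_pair_segment_nearest
    (Q S : Set (EuclideanSpace ℝ (Fin 2)))
    (p q' : EuclideanSpace ℝ (Fin 2)) (hp : p ∈ Q) (hq' : q' ∈ S)
    (hmin : ∀ r ∈ Q, ∀ z ∈ S, dist p q' ≤ dist r z) :
    ∀ w ∈ segment ℝ q' p, ∀ r ∈ Q, dist w p ≤ dist w r :=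
  closest_pair_segment_nearest_general Q S p q' hq' hmin
end

section
/- Let Q be a set of points in ℝ², let s be the horizontal segment from a = (x_a, y₀) to b = (x_b, y₀) with x_a ≤ x_b, and assume y(r) ≥ y₀ for every r ∈ Q. Let p ∈ Q satisfy x_a ≤ x(p) ≤ x_b and dist(p, s) ≤ dist(r, s) for all r ∈ Q (p is a closest point of s in Q). Then for every point q with x(q) = x(p) and y₀ ≤ y(q) ≤ y(p), and every r ∈ Q, one has dist(q, p) ≤ dist(q, r); that is, p is a nearest point of Q to every point of the vertical segment from the foot (x(p), y₀) up to p. -/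
lemma abs_sub_le_dist2 (x y : EuclideanSpace ℝ (Fin 2)) : |x 1 - y 1| ≤ dist x y := by
  have := EuclideanSpace.dist_eq x y
  rw [this]
  have h0 : (0:ℝ) ≤ (x 0 - y 0)^2 := sq_nonneg _
  have : |x 1 - y 1| = Real.sqrt ((x 1 - y 1)^2) := (Real.sqrt_sq_eq_abs _).symm
  rw [this]
  apply Real.sqrt_le_sqrt
  rw [Fin.sum_univ_two, Real.dist_eq, Real.dist_eq, sq_abs, sq_abs]
  nlinarith [sq_nonneg (x 0 - y 0)]

lemma dist_eq_of_eq0 (x y : EuclideanSpace ℝ (Fin 2)) (h : x 0 = y 0) :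
    dist x y = |x 1 - y 1| := by
  rw [EuclideanSpace.dist_eq, Fin.sum_univ_two, Real.dist_eq, Real.dist_eq, h, sub_self,
    abs_zero]
  simp [Real.sqrt_eq_iff_eq_sq, sq_abs, Real.sqrt_sq_eq_abs]

lemma seg_y (a b : EuclideanSpace ℝ (Fin 2)) (hy : a 1 = b 1) :
    ∀ u ∈ segment ℝ a b, u 1 = a 1 := by
  rintro u ⟨t, s, ht, hs, hts, rfl⟩
  simp only [PiLp.add_apply, PiLp.smul_apply, smul_eq_mul]
  rw [← hy]; linear_combination (a 1) * hts

lemma infDist_horiz (a b : EuclideanSpace ℝ (Fin 2)) (hy : a 1 = b 1) (hx : a 0 ≤ b 0)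
    (q : EuclideanSpace ℝ (Fin 2)) (hqa : a 0 ≤ q 0) (hqb : q 0 ≤ b 0) (hq1 : a 1 ≤ q 1) :
    Metric.infDist q (segment ℝ a b) = q 1 - a 1 := by
  have hne : (segment ℝ a b).Nonempty := ⟨a, left_mem_segment ℝ a b⟩
  apply le_antisymm
  · -- foot point
    obtain ⟨t, ht0, ht1, hft⟩ : ∃ t : ℝ, 0 ≤ t ∧ t ≤ 1 ∧ (1-t) * a 0 + t * b 0 = q 0 := by
      rcases eq_or_lt_of_le hx with h | h
      · exact ⟨0, le_refl _, zero_le_one, by nlinarith⟩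
      · refine ⟨(q 0 - a 0)/(b 0 - a 0), div_nonneg (by linarith) (by linarith), ?_, ?_⟩
        · rw [div_le_one (by linarith)]; linarith
        · have hne0 : b 0 - a 0 ≠ 0 := by linarith
          field_simp
          ring
    set f : EuclideanSpace ℝ (Fin 2) := (1-t) • a + t • b with hf
    have hfmem : f ∈ segment ℝ a b := ⟨1-t, t, by linarith, ht0, by ring, rfl⟩
    have hf0 : f 0 = q 0 := by
      simp only [hf, PiLp.add_apply, PiLp.smul_apply, smul_eq_mul]; exact hft
    have hf1 : f 1 = a 1 := seg_y a b hy f hfmem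
    calc Metric.infDist q (segment ℝ a b) ≤ dist q f := Metric.infDist_le_dist_of_mem hfmem
      _ = |q 1 - f 1| := dist_eq_of_eq0 q f hf0.symm
      _ = q 1 - a 1 := by rw [hf1, abs_of_nonneg (by linarith)]
  · refine le_of_not_gt fun hlt => ?_
    rw [Metric.infDist_lt_iff hne] at hlt
    obtain ⟨z, hz, hdz⟩ := hlt
    refine absurd hdz (not_lt.mpr ?_)
    calc q 1 - a 1 = |q 1 - z 1| := by rw [seg_y a b hy z hz, abs_of_nonneg (by linarith)]
      _ ≤ dist q z := abs_sub_le_dist2 q z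

/-- Let `s` be a horizontal segment from `a` to `b`, with all points of `Q` on or above
the line through `s`. If `p ∈ Q` is a closest point of `s` in `Q` and the x-coordinate of
`p` lies in `[x(a), x(b)]`, then `p` is a nearest point of `Q` to every point of the
vertical segment from the foot `(x(p), y₀)` up to `p`. -/
theorem closest_point_vertical_segment_nearest
    (Q : Set (EuclideanSpace ℝ (Fin 2)))
    (a b : EuclideanSpace ℝ (Fin 2)) (hy : a 1 = b 1) (hx : a 0 ≤ b 0)
    (hQ : ∀ r ∈ Q, a 1 ≤ r 1)
    (p : EuclideanSpace ℝ (Fin 2)) (hp : p ∈ Q)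
    (hpa : a 0 ≤ p 0) (hpb : p 0 ≤ b 0)
    (hclosest : ∀ r ∈ Q,
      Metric.infDist p (segment ℝ a b) ≤ Metric.infDist r (segment ℝ a b)) :
    ∀ q : EuclideanSpace ℝ (Fin 2), q 0 = p 0 → a 1 ≤ q 1 → q 1 ≤ p 1 →
      ∀ r ∈ Q, dist q p ≤ dist q r := by
  intro q hq0 hq1a hq1p r hr
  have hIq : Metric.infDist q (segment ℝ a b) = q 1 - a 1 :=
    infDist_horiz a b hy hx q (hq0 ▸ hpa) (hq0 ▸ hpb) hq1a
  have hIp : Metric.infDist p (segment ℝ a b) = p 1 - a 1 :=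
    infDist_horiz a b hy hx p hpa hpb (hQ p hp)
  have htri : Metric.infDist r (segment ℝ a b) ≤ Metric.infDist q (segment ℝ a b) + dist r q :=
    Metric.infDist_le_infDist_add_dist
  have hc := hclosest r hr
  have hdqp : dist q p = p 1 - q 1 := by
    rw [dist_eq_of_eq0 q p hq0, abs_of_nonpos (by linarith)]; ring
  rw [hdqp, dist_comm q r]
  linarith [hIq ▸ hIp ▸ (hc.trans htri)]
end

section
/- Let E be a real inner product space, let Q be a set of points of E, and fix v, u ∈ E (u a direction of a line). Let p, p' ∈ Q with ⟪p, u⟫ < ⟪p', u⟫, and let σ, τ be real numbers such that dist(v + σ·u, p) ≤ dist(v + σ·u, r) for all r ∈ Q (p is a nearest point of Q to v + σ·u) and dist(v + τ·u, p') ≤ dist(v + τ·u, r) for all r ∈ Q (p' is a nearest point of Q to v + τ·u). Then σ ≤ τ. In words, the order in which the Voronoi cells of points of Q meet a line agrees with the order of the perpendicular projections of those points onto the line. -/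
/-- The order in which the Voronoi cells of points of `Q` meet a line agrees with the
order of the perpendicular projections of those points onto the line: if `p` is a
nearest point of `Q` to `v + σ • u`, `p'` is a nearest point of `Q` to `v + τ • u`,
and the projection of `p` onto `u` strictly precedes that of `p'`, then `σ ≤ τ`. -/
theorem voronoi_cells_meet_line_in_projection_order
    {E : Type*} [NormedAddCommGroup E] [InnerProductSpace ℝ E]
    (Q : Set E) (v u : E) (p p' : E) (hp : p ∈ Q) (hp' : p' ∈ Q)
    (h : (inner ℝ p u : ℝ) < (inner ℝ p' u : ℝ))
    (σ τ : ℝ)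
    (hσ : ∀ r ∈ Q, dist (v + σ • u) p ≤ dist (v + σ • u) r)
    (hτ : ∀ r ∈ Q, dist (v + τ • u) p' ≤ dist (v + τ • u) r) :
    σ ≤ τ := by
  have h1 := hσ p' hp'
  have h2 := hτ p hp
  have H1 : dist (v + σ • u) p ^ 2 ≤ dist (v + σ • u) p' ^ 2 :=
    pow_le_pow_left₀ dist_nonneg h1 2
  have H2 : dist (v + τ • u) p' ^ 2 ≤ dist (v + τ • u) p ^ 2 :=
    pow_le_pow_left₀ dist_nonneg h2 2
  have e : ∀ (s : ℝ) (q : E), dist (v + s • u) q ^ 2 =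
      ‖v‖ ^ 2 + 2 * s * inner ℝ v u + s ^ 2 * ‖u‖ ^ 2
        - 2 * (inner ℝ v q + s * inner ℝ q u) + ‖q‖ ^ 2 := by
    intro s q
    rw [dist_eq_norm, ← real_inner_self_eq_norm_sq]
    simp [inner_sub_sub_self, inner_add_add_self, inner_add_left, inner_add_right,
      real_inner_smul_left, real_inner_smul_right, real_inner_self_eq_norm_sq,
      real_inner_comm q v, real_inner_comm u v, real_inner_comm u q, norm_smul,
      mul_pow, sq_abs]
    rw [norm_sub_sq_real, norm_add_sq_real, inner_add_left, real_inner_smul_left,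
      real_inner_smul_right, norm_smul, mul_pow, Real.norm_eq_abs, sq_abs,
      real_inner_comm u v, real_inner_comm q v]
    ring
  rw [e, e] at H1 H2
  nlinarith [h, H1, H2]
end

section
/- Suppose some index j satisfies x(p_j) ≤ x(b), and let j* be the largest such index. If either no index i satisfies x(p_j) ≥ x(a) for all j with i ≤ j ≤ m, or the smallest such index i* satisfies i* > j*, then no point pᵢ (1 ≤ i ≤ m) with x(a) ≤ x(pᵢ) ≤ x(b) is the unique closest point of s in Q. (Lemma: if i* does not exist or i* > j*, then p_s cannot be the closest point of s in Q.) -/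
theorem aux_key_ineq (k a0 a1 pi0 pi1 pj0 pj1 v0 v1 : ℝ) (hk : k < 0)
    (hja : pj0 < a0) (haPi : a0 ≤ pi0)
    (hline : a1 ≤ v1 + k * (pi0 - v0))
    (hQL : v1 + k * (pj0 - v0) ≤ pj1)
    (hproj : pi0 + pi1 * k < pj0 + pj1 * k)
    (hja1 : a1 < pj1) (hia1 : a1 < pi1) :
    (a0 - pj0) ^ 2 + (pj1 - a1) ^ 2 < (pi1 - a1) ^ 2 := by
  set H := pi1 - a1 with hH
  set h := pj1 - a1 with hh
  set d := pi0 - pj0 with hd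
  set w := a0 - pj0 with hw
  have hc : 0 < -k := by linarith
  have hd0 : 0 < d := by simp only [hd]; linarith
  have hw0 : 0 < w := by simp only [hw]; linarith
  have hwd : w ≤ d := by simp only [hw, hd]; linarith
  have hh0 : 0 < h := by simp only [hh]; linarith
  have hH0 : 0 < H := by simp only [hH]; linarith
  have hhcd : (-k) * d ≤ h := by simp only [hh, hd]; nlinarith
  have hprojd : d < (-k) * (H - h) := by simp only [hH, hh, hd]; nlinarith
  have e2 : (-k) * ((-k) * d) ≤ (-k) * h := mul_le_mul_of_nonneg_left hhcd hc.le
  have hXpos : 0 < (-k) * (H - h) := lt_trans hd0 hprojd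
  have hXY : (-k) * (H - h) + 2 * ((-k) * ((-k) * d)) ≤ (-k) * (H + h) := by nlinarith [e2]
  have h1 : ((-k) * (H - h)) * ((-k) * (H - h) + 2 * ((-k) * ((-k) * d)))
      ≤ ((-k) * (H - h)) * ((-k) * (H + h)) :=
    mul_le_mul_of_nonneg_left hXY hXpos.le
  have hccd : 0 < (-k) * ((-k) * d) := by positivity
  have h2 : d * (d + 2 * ((-k) * ((-k) * d)))
      < ((-k) * (H - h)) * ((-k) * (H - h) + 2 * ((-k) * ((-k) * d))) :=
    mul_lt_mul'' hprojd (by linarith) hd0.le (by linarith)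
  have h3 : ((-k) * (-k)) * (w * w) ≤ ((-k) * (-k)) * (d * d) := by
    apply mul_le_mul_of_nonneg_left _ (by positivity)
    nlinarith [hwd, hw0]
  have h4 : ((-k) * (-k)) * (w ^ 2 + h ^ 2) < ((-k) * (-k)) * (H ^ 2) := by
    nlinarith [h1, h2, h3, mul_pos hd0 hd0, mul_pos (mul_pos hc hc) (mul_pos hd0 hd0)]
  exact lt_of_mul_lt_mul_left h4 (by positivity)



/-- Lemma: in the outside-hull segment query setting, if the index `i*` does not exist,
or `i* > j*`, then no point `pᵢ` with `x(a) ≤ x(pᵢ) ≤ x(b)` can be the (unique) closest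
point of the segment `s` in `Q`. -/
theorem no_closest_point_if_istar_missing_or_large
    (Q : Finset (EuclideanSpace ℝ (Fin 2)))
    (a b : EuclideanSpace ℝ (Fin 2))
    (hab : a 1 = b 1) (hxab : a 0 ≤ b 0)
    (hQabove : ∀ q ∈ Q, a 1 < q 1)
    (k : ℝ) (hk : k < 0)
    (u : EuclideanSpace ℝ (Fin 2)) (hu0 : u 0 = 1) (hu1 : u 1 = k)
    (v : EuclideanSpace ℝ (Fin 2))
    (e : Set (EuclideanSpace ℝ (Fin 2)))
    (heL : ∀ q ∈ e, ∃ t : ℝ, q = v + t • u)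
    (heSeg : ∃ c d : EuclideanSpace ℝ (Fin 2), e = segment ℝ c d)
    (heAbove : ∀ q ∈ e, a 1 ≤ q 1)
    (hQaboveL : ∀ q ∈ Q, v 1 + k * (q 0 - v 0) ≤ q 1)
    (m : ℕ) (p : ℕ → EuclideanSpace ℝ (Fin 2))
    (hpQ : ∀ i, 1 ≤ i → i ≤ m → p i ∈ Q)
    (hpInj : ∀ i j, 1 ≤ i → i ≤ m → 1 ≤ j → j ≤ m → i ≠ j → p i ≠ p j)
    (hVor : ∀ i, 1 ≤ i → i ≤ m → ∃ q ∈ e, ∀ r ∈ Q, dist q (p i) ≤ dist q r)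
    (hProjOrder : ∀ i j, 1 ≤ i → i < j → j ≤ m →
      (inner ℝ (p i) u : ℝ) < (inner ℝ (p j) u : ℝ))
    (hVorOrder : ∀ i j, 1 ≤ i → i < j → j ≤ m → ∀ q ∈ e, ∀ q' ∈ e,
      (∀ r ∈ Q, dist q (p i) ≤ dist q r) → (∀ r ∈ Q, dist q' (p j) ≤ dist q' r) →
      q 0 ≤ q' 0)
    (hVert : ∀ i, 1 ≤ i → i ≤ m → a 0 ≤ p i 0 → p i 0 ≤ b 0 → ∃ q ∈ e, q 0 = p i 0)
    (jstar : ℕ) (hj1 : 1 ≤ jstar) (hjm : jstar ≤ m) (hjB : p jstar 0 ≤ b 0)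
    (hjmax : ∀ j, 1 ≤ j → j ≤ m → p j 0 ≤ b 0 → j ≤ jstar)
    (hIstar : (¬ ∃ i, 1 ≤ i ∧ i ≤ m ∧ ∀ j, i ≤ j → j ≤ m → a 0 ≤ p j 0) ∨
      (∃ istar, (1 ≤ istar ∧ istar ≤ m ∧ ∀ j, istar ≤ j → j ≤ m → a 0 ≤ p j 0) ∧
        (∀ i, 1 ≤ i → i ≤ m → (∀ j, i ≤ j → j ≤ m → a 0 ≤ p j 0) → istar ≤ i) ∧
        jstar < istar)) :
    ∀ i, 1 ≤ i → i ≤ m → a 0 ≤ p i 0 → p i 0 ≤ b 0 →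
      ¬ (∀ r ∈ Q, r ≠ p i →
          Metric.infDist (p i) (segment ℝ a b) < Metric.infDist r (segment ℝ a b)) := by

  intro i hi1 him haPi hPib hclosest
  -- obtain an index `j ≥ i` with `p j 0 < a 0`
  have hPfail : ¬ ∀ j, i ≤ j → j ≤ m → a 0 ≤ p j 0 := by
    rcases hIstar with h | ⟨istar, ⟨hi1', him', hP⟩, hmin, hlt⟩
    · exact fun hP => h ⟨i, hi1, him, hP⟩
    · intro hPi
      have h1 : istar ≤ i := hmin i hi1 him hPi
      have h2 : i ≤ jstar := hjmax i hi1 him hPib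
      omega
  push_neg at hPfail
  obtain ⟨j, hij, hjm2, hja⟩ := hPfail
  have hilt : i < j := lt_of_le_of_ne hij (by rintro rfl; linarith)
  have hj1' : 1 ≤ j := le_trans hi1 hij
  -- projection order
  have hproj := hProjOrder i j hi1 hilt hjm2
  simp only [PiLp.inner_apply, RCLike.inner_apply, conj_trivial, Fin.sum_univ_two,
    hu0, hu1, mul_one] at hproj
  -- vertical point on e above p i
  obtain ⟨q, hqe, hq0⟩ := hVert i hi1 him haPi hPib
  have hq1 : a 1 ≤ q 1 := heAbove q hqe
  obtain ⟨t, hqt⟩ := heL q hqe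
  have hq0' : q 0 = v 0 + t := by rw [hqt]; simp [hu0]
  have hq1' : q 1 = v 1 + t * k := by rw [hqt]; simp [hu1]
  -- line bound for p j
  have hQL := hQaboveL (p j) (hpQ j hj1' hjm2)
  have hja1 : a 1 < p j 1 := hQabove (p j) (hpQ j hj1' hjm2)
  have hia1 : a 1 < p i 1 := hQabove (p i) (hpQ i hi1 him)
  have hline : a 1 ≤ v 1 + k * (p i 0 - v 0) := by
    have ht : t = p i 0 - v 0 := by rw [← hq0]; linarith [hq0']
    rw [ht] at hq1'; linarith [hq1', hq1]
  have hkey : (a 0 - p j 0) ^ 2 + (p j 1 - a 1) ^ 2 < (p i 1 - a 1) ^ 2 :=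
    aux_key_ineq k (a 0) (a 1) (p i 0) (p i 1) (p j 0) (p j 1) (v 0) (v 1)
      hk hja haPi hline hQL (by linarith [hproj]) hja1 hia1
  have hH0 : (0:ℝ) < p i 1 - a 1 := by linarith
  -- distance from p j to the segment
  have hamem : a ∈ segment ℝ a b := left_mem_segment ℝ a b
  have hdja : dist (p j) a = Real.sqrt ((a 0 - p j 0) ^ 2 + (p j 1 - a 1) ^ 2) := by
    rw [EuclideanSpace.dist_eq]
    congr 1
    rw [Fin.sum_univ_two]
    simp only [Real.dist_eq, sq_abs]
    ring
  have hdjlt : dist (p j) a < p i 1 - a 1 := by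
    rw [hdja]
    exact (Real.sqrt_lt' hH0).2 hkey
  have hinfj : Metric.infDist (p j) (segment ℝ a b) < p i 1 - a 1 :=
    lt_of_le_of_lt (Metric.infDist_le_dist_of_mem hamem) hdjlt
  -- distance from p i to the segment is at least p i 1 - a 1
  have hinfi : p i 1 - a 1 ≤ Metric.infDist (p i) (segment ℝ a b) := by
    haveI : Nonempty (segment ℝ a b) := ⟨⟨a, hamem⟩⟩
    rw [Metric.infDist_eq_iInf]
    apply le_ciInf
    rintro ⟨z, hz⟩
    show p i 1 - a 1 ≤ dist (p i) z
    obtain ⟨α, β, hα, hβ, hαβ, rfl⟩ := hz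
    have hz1 : (α • a + β • b) 1 = a 1 := by
      simp only [PiLp.add_apply, PiLp.smul_apply, smul_eq_mul, ← hab]
      linear_combination a 1 * hαβ
    rw [EuclideanSpace.dist_eq, Fin.sum_univ_two]
    simp only [Real.dist_eq, sq_abs]
    rw [hz1]
    rw [Real.le_sqrt' hH0]
    nlinarith [sq_nonneg (p i 0 - (α • a + β • b) 0)]
  -- contradiction with uniqueness
  have hne : p j ≠ p i := hpInj j i hj1' hjm2 hi1 him (by omega)
  have := hclosest (p j) (hpQ j hj1' hjm2) hne
  linarith
end

section
/- Suppose both i* and j* exist and i* ≤ j*. If p_t (for some 1 ≤ t ≤ m) satisfies x(a) ≤ x(p_t) ≤ x(b) and p_t is the unique closest point of s in Q, then i* ≤ t ≤ j* and dist(p_t, ℓ) ≤ dist(pᵢ, ℓ) for every i with i* ≤ i ≤ j*; that is, the closest point p_s of s in Q is a point of {p_{i*}, …, p_{j*}} closest to the supporting line ℓ of s. -/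
open Metric

set_option maxHeartbeats 1000000

private lemma cp_le_infDist (x : EuclideanSpace ℝ (Fin 2)) (s : Set (EuclideanSpace ℝ (Fin 2)))
    (c : ℝ) (hs : s.Nonempty) (h : ∀ y ∈ s, c ≤ dist x y) : c ≤ Metric.infDist x s := by
  by_contra hc
  push_neg at hc
  obtain ⟨y, hy, hd⟩ := (Metric.infDist_lt_iff hs).1 hc
  exact absurd (h y hy) (not_le.2 hd)

private lemma cp_dist_eq (x y : EuclideanSpace ℝ (Fin 2)) :
    dist x y = Real.sqrt ((x 0 - y 0)^2 + (x 1 - y 1)^2) := by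
  rw [EuclideanSpace.dist_eq, Fin.sum_univ_two]
  simp [Real.dist_eq, sq_abs]

private lemma cp_dist_sq (x y : EuclideanSpace ℝ (Fin 2)) :
    dist x y ^ 2 = (x 0 - y 0)^2 + (x 1 - y 1)^2 := by
  rw [cp_dist_eq]; exact Real.sq_sqrt (by positivity)

private lemma cp_vert_le_dist (x y : EuclideanSpace ℝ (Fin 2)) :
    x 1 - y 1 ≤ dist x y := by
  rw [cp_dist_eq]
  calc x 1 - y 1 ≤ |x 1 - y 1| := le_abs_self _
    _ = Real.sqrt ((x 1 - y 1)^2) := (Real.sqrt_sq_eq_abs _).symm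
    _ ≤ _ := Real.sqrt_le_sqrt (by nlinarith [sq_nonneg (x 0 - y 0)])


/-- Lemma: if both `i*` and `j*` exist and `i* ≤ j*`, and `p_t` (with
`x(a) ≤ x(p_t) ≤ x(b)`) is the unique closest point of the segment `s` in `Q`, then
`i* ≤ t ≤ j*` and `p_t` is a point of `{p_{i*}, …, p_{j*}}` closest to the supporting
line `ℓ` of `s`. -/
theorem closest_point_is_closest_to_supporting_line
    (Q : Finset (EuclideanSpace ℝ (Fin 2)))
    (a b : EuclideanSpace ℝ (Fin 2))
    (hab : a 1 = b 1) (hxab : a 0 ≤ b 0)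
    (hQabove : ∀ q ∈ Q, a 1 < q 1)
    (k : ℝ) (hk : k < 0)
    (u : EuclideanSpace ℝ (Fin 2)) (hu0 : u 0 = 1) (hu1 : u 1 = k)
    (v : EuclideanSpace ℝ (Fin 2))
    (e : Set (EuclideanSpace ℝ (Fin 2)))
    (heL : ∀ q ∈ e, ∃ t : ℝ, q = v + t • u)
    (heSeg : ∃ c d : EuclideanSpace ℝ (Fin 2), e = segment ℝ c d)
    (heAbove : ∀ q ∈ e, a 1 ≤ q 1)
    (hQaboveL : ∀ q ∈ Q, v 1 + k * (q 0 - v 0) ≤ q 1)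
    (m : ℕ) (p : ℕ → EuclideanSpace ℝ (Fin 2))
    (hpQ : ∀ i, 1 ≤ i → i ≤ m → p i ∈ Q)
    (hpInj : ∀ i j, 1 ≤ i → i ≤ m → 1 ≤ j → j ≤ m → i ≠ j → p i ≠ p j)
    (hVor : ∀ i, 1 ≤ i → i ≤ m → ∃ q ∈ e, ∀ r ∈ Q, dist q (p i) ≤ dist q r)
    (hProjOrder : ∀ i j, 1 ≤ i → i < j → j ≤ m →
      (inner ℝ (p i) u : ℝ) < (inner ℝ (p j) u : ℝ))
    (hVorOrder : ∀ i j, 1 ≤ i → i < j → j ≤ m → ∀ q ∈ e, ∀ q' ∈ e,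
      (∀ r ∈ Q, dist q (p i) ≤ dist q r) → (∀ r ∈ Q, dist q' (p j) ≤ dist q' r) →
      q 0 ≤ q' 0)
    (hVert : ∀ i, 1 ≤ i → i ≤ m → a 0 ≤ p i 0 → p i 0 ≤ b 0 → ∃ q ∈ e, q 0 = p i 0)
    (jstar : ℕ) (hj1 : 1 ≤ jstar) (hjm : jstar ≤ m) (hjB : p jstar 0 ≤ b 0)
    (hjmax : ∀ j, 1 ≤ j → j ≤ m → p j 0 ≤ b 0 → j ≤ jstar)
    (istar : ℕ) (hi1 : 1 ≤ istar) (him : istar ≤ m)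
    (hiA : ∀ j, istar ≤ j → j ≤ m → a 0 ≤ p j 0)
    (himin : ∀ i, 1 ≤ i → i ≤ m → (∀ j, i ≤ j → j ≤ m → a 0 ≤ p j 0) → istar ≤ i)
    (hij : istar ≤ jstar)
    (t : ℕ) (ht1 : 1 ≤ t) (htm : t ≤ m)
    (hta : a 0 ≤ p t 0) (htb : p t 0 ≤ b 0)
    (htclosest : ∀ r ∈ Q, r ≠ p t →
      Metric.infDist (p t) (segment ℝ a b) < Metric.infDist r (segment ℝ a b)) :
    istar ≤ t ∧ t ≤ jstar ∧
    ∀ i, istar ≤ i → i ≤ jstar →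
      Metric.infDist (p t) {z : EuclideanSpace ℝ (Fin 2) | z 1 = a 1} ≤
      Metric.infDist (p i) {z : EuclideanSpace ℝ (Fin 2) | z 1 = a 1} := by
  have hinner : ∀ i, (inner ℝ (p i) u : ℝ) = p i 0 + p i 1 * k := by
    intro i
    have h : (inner ℝ (p i) u : ℝ) = p i 0 * u 0 + p i 1 * u 1 := by
      simp [PiLp.inner_apply, RCLike.inner_apply, Fin.sum_univ_two, mul_comm]
    rw [h, hu0, hu1]; ring
  have hseg1 : ∀ z ∈ segment ℝ a b, z 1 = a 1 := by
    rintro z ⟨x, y, hx, hy, hxy, rfl⟩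
    simp [hab]
    linear_combination (b 1) * hxy
  have hfoot : ∀ c : ℝ, a 0 ≤ c → c ≤ b 0 → ∃ z ∈ segment ℝ a b, z 0 = c ∧ z 1 = a 1 := by
    intro c h1 h2
    have hc : c ∈ segment ℝ (a 0) (b 0) := by rw [segment_eq_Icc hxab]; exact ⟨h1, h2⟩
    obtain ⟨x, y, hx, hy, hxy, hcc⟩ := hc
    simp only [smul_eq_mul] at hcc
    refine ⟨x • a + y • b, ⟨x, y, hx, hy, hxy, rfl⟩, ?_, ?_⟩
    · show (x • a + y • b) 0 = c
      simp
      linarith [hcc]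
    · show (x • a + y • b) 1 = a 1
      simp [hab]
      linear_combination (b 1) * hxy
  have hQs : (segment ℝ a b).Nonempty := ⟨a, left_mem_segment ℝ a b⟩
  have hlow : ∀ r : EuclideanSpace ℝ (Fin 2), r 1 - a 1 ≤ infDist r (segment ℝ a b) := by
    intro r
    refine cp_le_infDist _ _ _ hQs ?_
    intro z hz
    have h := cp_vert_le_dist r z
    rwa [hseg1 z hz] at h
  have hupC : ∀ r ∈ Q, r ≠ p t → a 0 ≤ r 0 → r 0 ≤ b 0 → r 1 < p t 1 → False := by
    intro r hrQ hrne h1 h2 h3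
    obtain ⟨z, hzs, hz0, hz1⟩ := hfoot (r 0) h1 h2
    have hra : a 1 < r 1 := hQabove r hrQ
    have hd : dist r z = r 1 - a 1 := by
      rw [cp_dist_eq, hz0, hz1,
        show (r 0 - r 0)^2 + (r 1 - a 1)^2 = (r 1 - a 1)^2 by ring]
      exact Real.sqrt_sq (by linarith)
    have h4 : infDist r (segment ℝ a b) ≤ r 1 - a 1 := by
      rw [← hd]; exact infDist_le_dist_of_mem hzs
    have h5 := hlow (p t)
    have h6 := htclosest r hrQ hrne
    linarith
  have hytQ : a 1 < p t 1 := hQabove _ (hpQ t ht1 htm)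
  have hA : ∀ j, t ≤ j → j ≤ m → a 0 ≤ p j 0 := by
    intro j htj hjm'
    by_contra hneg
    push_neg at hneg
    have hj1' : 1 ≤ j := le_trans ht1 htj
    have htj' : t < j := lt_of_le_of_ne htj (by rintro rfl; exact absurd hta (not_le.2 hneg))
    have hjQ : p j ∈ Q := hpQ j hj1' hjm'
    have hyj : a 1 < p j 1 := hQabove _ hjQ
    obtain ⟨q, hqe, hqvor⟩ := hVor j hj1' hjm'
    obtain ⟨sq, hsq⟩ := heL q hqe
    have hql : q 1 = v 1 + k * (q 0 - v 0) := by
      have h0 : q 0 = v 0 + sq * u 0 := by rw [hsq]; simp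
      have h1 : q 1 = v 1 + sq * u 1 := by rw [hsq]; simp
      rw [h0, h1, hu0, hu1]; ring
    have hqa : a 1 ≤ q 1 := heAbove q hqe
    obtain ⟨qt, hqte, hqt0⟩ := hVert t ht1 htm hta htb
    obtain ⟨st, hst⟩ := heL qt hqte
    have hLt : a 1 ≤ v 1 + k * (p t 0 - v 0) := by
      have h0 : qt 0 = v 0 + st * u 0 := by rw [hst]; simp
      have h1 : qt 1 = v 1 + st * u 1 := by rw [hst]; simp
      have h2 := heAbove qt hqte
      rw [h1, hu1] at h2
      rw [h0, hu0] at hqt0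
      have : v 1 + k * (p t 0 - v 0) = v 1 + st * k := by rw [← hqt0]; ring
      linarith
    have hproj := hProjOrder t j ht1 htj' hjm'
    rw [hinner t, hinner j] at hproj
    have hdx : 0 < p t 0 - p j 0 := by linarith
    have hdy : p j 1 < p t 1 := by nlinarith
    have hcls : dist q (p j) ≤ dist q (p t) := hqvor (p t) (hpQ t ht1 htm)
    have hcls2 : (q 0 - p j 0)^2 + (q 1 - p j 1)^2 ≤ (q 0 - p t 0)^2 + (q 1 - p t 1)^2 := by
      have h := pow_le_pow_left₀ dist_nonneg hcls 2
      rwa [cp_dist_sq, cp_dist_sq] at h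
    have hkey : (p t 0 - q 0) * (p t 0 - p j 0) ≤ (q 1 - a 1) * (p t 1 - p j 1) := by
      rcases le_or_gt (p t 0) (q 0) with h | h
      · nlinarith [mul_nonneg (sub_nonneg.2 hqa) (by linarith : (0:ℝ) ≤ p t 1 - p j 1),
          mul_nonneg (sub_nonneg.2 h) hdx.le]
      · have hL2 : (-k) * (p t 0 - q 0) ≤ q 1 - a 1 := by
          rw [hql]; nlinarith [hLt]
        nlinarith [mul_le_mul_of_nonneg_left
            (le_of_lt (by nlinarith : p t 0 - p j 0 < (-k) * (p t 1 - p j 1)))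
            (by linarith : (0:ℝ) ≤ p t 0 - q 0),
          mul_le_mul_of_nonneg_right hL2 (by linarith : (0:ℝ) ≤ p t 1 - p j 1)]
    have hgoal : (p j 0 - p t 0)^2 + (p j 1 - a 1)^2 ≤ (p t 1 - a 1)^2 := by
      nlinarith [hcls2, hkey]
    obtain ⟨f, hfs, hf0, hf1⟩ := hfoot (p t 0) hta htb
    have hdf : dist (p j) f ≤ p t 1 - a 1 := by
      rw [cp_dist_eq, hf0, hf1]
      calc Real.sqrt ((p j 0 - p t 0)^2 + (p j 1 - a 1)^2)
          ≤ Real.sqrt ((p t 1 - a 1)^2) := Real.sqrt_le_sqrt hgoal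
        _ = p t 1 - a 1 := Real.sqrt_sq (by linarith)
    have h6 : infDist (p j) (segment ℝ a b) ≤ p t 1 - a 1 :=
      le_trans (infDist_le_dist_of_mem hfs) hdf
    have h5 := hlow (p t)
    have hne : p j ≠ p t := fun h => by rw [h] at hneg; exact absurd hta (not_le.2 hneg)
    have h7 := htclosest (p j) hjQ hne
    linarith
  have hit : istar ≤ t := himin t ht1 htm hA
  have htjs : t ≤ jstar := hjmax t ht1 htm htb
  refine ⟨hit, htjs, ?_⟩
  have hLne : ({z : EuclideanSpace ℝ (Fin 2) | z 1 = a 1}).Nonempty := ⟨a, rfl⟩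
  have hlowL : ∀ r : EuclideanSpace ℝ (Fin 2),
      r 1 - a 1 ≤ infDist r {z : EuclideanSpace ℝ (Fin 2) | z 1 = a 1} := by
    intro r
    refine cp_le_infDist _ _ _ hLne ?_
    intro z hz
    have h := cp_vert_le_dist r z
    rwa [show z 1 = a 1 from hz] at h
  have hupL : ∀ r : EuclideanSpace ℝ (Fin 2), a 1 ≤ r 1 →
      infDist r {z : EuclideanSpace ℝ (Fin 2) | z 1 = a 1} ≤ r 1 - a 1 := by
    intro r hr
    set z : EuclideanSpace ℝ (Fin 2) := (WithLp.equiv 2 (Fin 2 → ℝ)).symm ![r 0, a 1] with hzdef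
    have hz0 : z 0 = r 0 := rfl
    have hz1 : z 1 = a 1 := rfl
    have hzL : z ∈ {z : EuclideanSpace ℝ (Fin 2) | z 1 = a 1} := hz1
    have hd : dist r z = r 1 - a 1 := by
      rw [cp_dist_eq, hz0, hz1,
        show (r 0 - r 0)^2 + (r 1 - a 1)^2 = (r 1 - a 1)^2 by ring]
      exact Real.sqrt_sq (by linarith)
    rw [← hd]; exact infDist_le_dist_of_mem hzL
  intro i hi1' hi2'
  have him' : i ≤ m := le_trans hi2' hjm
  have h1i : 1 ≤ i := le_trans hi1 hi1'
  have hiQ : p i ∈ Q := hpQ i h1i him'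
  have hyi : a 1 < p i 1 := hQabove _ hiQ
  have hmain : p t 1 ≤ p i 1 := by
    by_contra hlt
    push_neg at hlt
    have hia : a 0 ≤ p i 0 := hiA i hi1' him'
    have hneit : i ≠ t := fun h => by rw [h] at hlt; exact lt_irrefl _ hlt
    have hnep : p i ≠ p t := hpInj i t h1i him' ht1 htm hneit
    rcases lt_or_gt_of_ne hneit with hcase | hcase
    · have hproj := hProjOrder i t h1i hcase htm
      rw [hinner i, hinner t] at hproj
      have hib : p i 0 ≤ b 0 := by nlinarith
      exact hupC (p i) hiQ hnep hia hib hlt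
    · rcases le_or_gt (p i 0) (b 0) with hib | hib
      · exact hupC (p i) hiQ hnep hia hib hlt
      · have hneij : i ≠ jstar := fun h => by rw [h] at hib; exact absurd hjB (not_le.2 hib)
        have hij' : i < jstar := lt_of_le_of_ne hi2' hneij
        have hproj := hProjOrder i jstar h1i hij' hjm
        rw [hinner i, hinner jstar] at hproj
        have hyJ : p jstar 1 < p i 1 := by nlinarith
        have hJa : a 0 ≤ p jstar 0 := hiA jstar hij hjm
        have hneJt : p jstar ≠ p t := by
          intro h
          have h2 : p jstar 1 = p t 1 := by rw [h]
          linarith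
        exact hupC (p jstar) (hpQ jstar hj1 hjm) hneJt hJa hjB (by linarith)
  have hl1 := hlowL (p i)
  have hl2 := hupL (p t) (le_of_lt hytQ)
  linarith
end
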